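/- Let p(·) ∈ P(ℝ^n) ∩ LH(ℝ^n) with p_+ < ∞. If f ∈ L^{p(·)}(ℝ^n), then M_{p(·)} f(x) < ∞ for almost every x ∈ ℝ^n, where M_{p(·)} f(x) = sup_{Q ∋ x} ‖f 1_Q‖_{L^{p(·)}} / ‖1_Q‖_{L^{p(·)}}, the supremum ranging over cubes containing x. -/

import Mathlib

/-!
Put `g = |f|^{p(·)}`. Since `‖f‖_{p(·)} < ∞` and `p ≤ p₊`, `g` is integrable, so by Besicovitch
differentiation almost every `x` has a constant `A_x` with `∫_Q g ≤ A_x |Q|` for every cube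
`Q ∋ x`. Large cubes are harmless: `‖f 1_Q‖ ≤ ‖f‖` while `‖1_Q‖` is bounded below. On a small
cube `Q ∋ x`, log-Hölder continuity keeps `p` within `δ` of `s = p(x)` with `|Q|^{-δ}` bounded,
so `p` may be replaced by the constant `s` up to bounded factors: `‖1_Q‖ ≳ |Q|^{1/s}` and
`‖f 1_Q‖ ≲ A_x² |Q|^{1/s}`.
-/

open MeasureTheory ENNReal

noncomputable section

abbrev Euc (n : ℕ) := EuclideanSpace ℝ (Fin n)

/-- The half-open cube with lower-left corner `a` and side length `ℓ`,
with sides parallel to the coordinate axes. -/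
def cube {n : ℕ} (a : Euc n) (ℓ : ℝ) : Set (Euc n) :=
  WithLp.ofLp ⁻¹' (Set.univ.pi fun i => Set.Ico (a i) (a i + ℓ))

/-- Local log-Hölder continuity with constant `C0`. -/
def LocLH {n : ℕ} (r : Euc n → ℝ) (C0 : ℝ) : Prop :=
  ∀ x y : Euc n, dist x y < 1 / 2 → |r x - r y| ≤ C0 / (-Real.log (dist x y))

/-- Log-Hölder continuity at infinity with constant `Ci` and limit value `rinf`. -/
def InfLH {n : ℕ} (r : Euc n → ℝ) (Ci rinf : ℝ) : Prop :=
  ∀ x : Euc n, |r x - rinf| ≤ Ci / Real.log (Real.exp 1 + ‖x‖)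

/-- The modular of a variable Lebesgue space with (extended-real valued) exponent `p`:
the integral of `f ^ p` over the set where `p` is finite plus the essential supremum
of `f` over the set where `p = ∞`. -/
def modularE {n : ℕ} (p : Euc n → ℝ≥0∞) (f : Euc n → ℝ≥0∞) : ℝ≥0∞ :=
  (∫⁻ x in {x | p x ≠ ∞}, f x ^ (p x).toReal) +
    essSup f (volume.restrict {x | p x = ∞})

/-- The Luxemburg norm of the variable Lebesgue space `L^{p(·)}(ℝⁿ)`. -/
def luxNormE {n : ℕ} (p : Euc n → ℝ≥0∞) (f : Euc n → ℝ≥0∞) : ℝ≥0∞ :=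
  sInf {l : ℝ≥0∞ | l ≠ 0 ∧ modularE p (fun x => f x / l) ≤ 1}

/-- The norm-average maximal operator `M_{p(·)} f(x) = sup_{Q ∋ x} ‖f 1_Q‖ / ‖1_Q‖`. -/
def MnormAvg {n : ℕ} (p : Euc n → ℝ≥0∞) (f : Euc n → ℝ≥0∞) (x : Euc n) : ℝ≥0∞ :=
  ⨆ (a : Euc n) (ℓ : ℝ) (_ : 0 < ℓ) (_ : x ∈ cube a ℓ),
    luxNormE p (fun y => (cube a ℓ).indicator f y) /
      luxNormE p ((cube a ℓ).indicator fun _ => 1)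


section Cubes

variable {n : ℕ}

lemma measurableSet_cube (a : Euc n) (ℓ : ℝ) : MeasurableSet (cube a ℓ) :=
  (MeasurableSet.univ_pi fun _ => measurableSet_Ico).preimage (WithLp.measurable_ofLp 2 _)

lemma volume_cube (a : Euc n) (ℓ : ℝ) :
    volume (cube a ℓ) = ENNReal.ofReal ℓ ^ n := by
  change volume ((MeasurableEquiv.toLp 2 (Fin n → ℝ)).symm ⁻¹' _) = _
  rw [(EuclideanSpace.volume_preserving_symm_measurableEquiv_toLp (Fin n)).measure_preimage
    (MeasurableSet.univ_pi fun _ => measurableSet_Ico).nullMeasurableSet, volume_pi_pi]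
  simp [Real.volume_Ico]

lemma dist_le_of_mem_cube {a x y : Euc n} {ℓ : ℝ} (hℓ : 0 ≤ ℓ)
    (hx : x ∈ cube a ℓ) (hy : y ∈ cube a ℓ) : dist x y ≤ √n * ℓ := by
  have hcoord : ∀ i, dist (x i) (y i) ^ 2 ≤ ℓ ^ 2 := fun i => by
    have hxi := hx i (Set.mem_univ i)
    have hyi := hy i (Set.mem_univ i)
    simp only [Set.mem_Ico] at hxi hyi
    rw [Real.dist_eq, sq_abs]
    nlinarith
  calc dist x y ≤ √(∑ _i : Fin n, ℓ ^ 2) := (EuclideanSpace.dist_eq x y).trans_le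
        (Real.sqrt_le_sqrt (Finset.sum_le_sum fun i _ => hcoord i))
    _ = √n * ℓ := by simp [Real.sqrt_mul (Nat.cast_nonneg n), Real.sqrt_sq hℓ]

lemma cube_subset_closedBall {a x : Euc n} {ℓ r : ℝ} (hℓ : 0 ≤ ℓ) (hr : √n * ℓ ≤ r)
    (hx : x ∈ cube a ℓ) : cube a ℓ ⊆ Metric.closedBall x r :=
  fun _ hy => (dist_le_of_mem_cube hℓ hy hx).trans hr

end Cubes

section LogHolder

variable {n : ℕ} {p : Euc n → ℝ} {C0 : ℝ}

lemma LocLH.abs_sub_le (h : LocLH p C0) {x y : Euc n} {ℓ : ℝ} (hℓ : 0 < ℓ) (hℓ4 : ℓ < 1 / 4)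
    (hxy : dist x y ≤ √ℓ) : |p x - p y| ≤ 2 * max C0 0 / -Real.log ℓ := by
  have hlogℓ : 0 < -Real.log ℓ := neg_pos.mpr (Real.log_neg hℓ (by linarith))
  rcases (dist_nonneg (x := x) (y := y)).eq_or_lt with hd | hd
  · rw [dist_eq_zero.mp hd.symm, sub_self, abs_zero]
    positivity
  have hsqrt : √ℓ < 1 / 2 := (Real.sqrt_lt' (by norm_num)).mpr (by linarith)
  have hlogd : -Real.log ℓ / 2 ≤ -Real.log (dist x y) := by
    have := Real.log_le_log hd hxy
    rw [Real.log_sqrt hℓ.le] at this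
    linarith
  calc |p x - p y| ≤ C0 / -Real.log (dist x y) := h x y (hxy.trans_lt hsqrt)
    _ ≤ max C0 0 / -Real.log (dist x y) :=
        div_le_div_of_nonneg_right (le_max_left C0 0) (by linarith)
    _ ≤ max C0 0 / (-Real.log ℓ / 2) := by gcongr
    _ = 2 * max C0 0 / -Real.log ℓ := by field_simp

lemma LocLH.exists_volume_cube_rpow_neg_le (h : LocLH p C0) :
    ∃ ℓ0 > 0, ℓ0 < 1 ∧ ∃ K : ℝ≥0∞, K ≠ ∞ ∧ ∀ (a : Euc n) (ℓ : ℝ), 0 < ℓ → ℓ ≤ ℓ0 →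
      ∃ δ, 0 ≤ δ ∧ δ ≤ 1 / 2 ∧ (∀ y ∈ cube a ℓ, ∀ z ∈ cube a ℓ, |p y - p z| ≤ δ) ∧
        volume (cube a ℓ) ^ (-δ) ≤ K := by
  set C := max C0 0
  have hC : 0 ≤ C := le_max_right C0 0
  have hexp : Real.exp (-(4 * C)) ≤ 1 := Real.exp_le_one_iff.mpr (by linarith)
  set ℓ0 := Real.exp (-(4 * C)) / (n + 5)
  have hℓ0 : ℓ0 ≤ 1 / (n + 5) := div_le_div_of_nonneg_right hexp (by positivity)
  have hn5 : (1 : ℝ) / (n + 5) ≤ 1 / 5 :=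
    one_div_le_one_div_of_le (by norm_num) (by linarith [(Nat.cast_nonneg n : (0 : ℝ) ≤ n)])
  -- `δ = 2C / -log ℓ` makes `ℓ ^ (-δ) = exp (2C)` exactly; `ℓ0` is small enough that
  -- `√n ℓ ≤ √ℓ < 1/2` and `δ ≤ 1/2`.
  refine ⟨ℓ0, by positivity, by linarith, ENNReal.ofReal (Real.exp (2 * C)) ^ n, by finiteness,
    fun a ℓ hℓ hℓℓ0 => ?_⟩
  have hlog : 4 * C ≤ -Real.log ℓ := by
    have := Real.log_le_log hℓ (hℓℓ0.trans (div_le_self (Real.exp_pos _).le (by linarith)))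
    rw [Real.log_exp] at this
    linarith
  have hlogℓ : 0 < -Real.log ℓ := neg_pos.mpr (Real.log_neg hℓ (by linarith))
  refine ⟨2 * C / -Real.log ℓ, by positivity, ?_, ?_, ?_⟩
  · rw [div_le_iff₀ hlogℓ]; linarith
  · intro y hy z hz
    refine h.abs_sub_le hℓ (by linarith) ((dist_le_of_mem_cube hℓ.le hy hz).trans ?_)
    have hnℓ : n * ℓ ≤ 1 := calc
      (n : ℝ) * ℓ ≤ n * (1 / (n + 5)) := by gcongr; exact hℓℓ0.trans hℓ0
      _ ≤ 1 := by rw [mul_one_div, div_le_one (by positivity)]; linarith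
    rw [Real.le_sqrt (by positivity) hℓ.le, mul_pow, Real.sq_sqrt (Nat.cast_nonneg n)]
    nlinarith
  · have hℓδ : ℓ ^ (-(2 * C / -Real.log ℓ)) = Real.exp (2 * C) := by
      rw [Real.rpow_def_of_pos hℓ]
      congr 1
      field_simp [(neg_pos.mp hlogℓ).ne]
    rw [volume_cube, ← ENNReal.rpow_natCast_mul, mul_comm, ENNReal.rpow_mul_natCast,
      ENNReal.ofReal_rpow_of_pos hℓ, hℓδ]

end LogHolder

section Differentiation

open Filter Topology Metric

lemma ae_exists_eventually_measure_closedBall_le {β : Type*} [MetricSpace β] [MeasurableSpace β]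
    [BorelSpace β] [SecondCountableTopology β] [HasBesicovitchCovering β]
    (ρ μ : Measure β) [IsLocallyFiniteMeasure μ] [IsLocallyFiniteMeasure ρ] :
    ∀ᵐ x ∂μ, ∃ L ≠ ∞, ∀ᶠ r in 𝓝[>] 0, ρ (closedBall x r) ≤ L * μ (closedBall x r) := by
  filter_upwards [Besicovitch.ae_tendsto_rnDeriv ρ μ, Measure.rnDeriv_lt_top ρ μ] with x hx hfin
  refine ⟨ρ.rnDeriv μ x + 1, by finiteness, ?_⟩
  filter_upwards [hx.eventually_lt_const (ENNReal.lt_add_right hfin.ne one_ne_zero)] with r hr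
  exact (ENNReal.div_le_iff_le_mul (Or.inr (by finiteness)) (Or.inr (by simp))).mp hr.le

lemma ae_exists_measure_cube_le {n : ℕ} (ρ : Measure (Euc n)) [IsFiniteMeasure ρ] :
    ∀ᵐ x, ∃ A ≠ ∞, ∀ (a : Euc n) (ℓ : ℝ), 0 < ℓ → x ∈ cube a ℓ →
      ρ (cube a ℓ) ≤ A * volume (cube a ℓ) := by
  filter_upwards [ae_exists_eventually_measure_closedBall_le ρ volume] with x ⟨L, hL, hev⟩
  obtain ⟨ε, hε, hball⟩ := mem_nhdsGT_iff_exists_Ioo_subset.mp hev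
  set S := √n + 1
  have hS : 0 < S := by positivity
  set ω := volume (closedBall (0 : Euc n) 1)
  have hεS : ENNReal.ofReal (ε / S) ^ n ≠ 0 :=
    pow_ne_zero _ (ENNReal.ofReal_pos.mpr (div_pos hε hS)).ne'
  refine ⟨L * ENNReal.ofReal (S ^ n) * ω + ρ Set.univ / ENNReal.ofReal (ε / S) ^ n,
    ENNReal.add_ne_top.mpr ⟨ENNReal.mul_ne_top (by finiteness) measure_closedBall_lt_top.ne,
      ENNReal.div_ne_top (measure_ne_top _ _) hεS⟩,
    fun a ℓ hℓ hx => ?_⟩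
  rw [volume_cube]
  rcases lt_or_ge (S * ℓ) ε with hsmall | hlarge
  · calc ρ (cube a ℓ) ≤ ρ (closedBall x (S * ℓ)) :=
          measure_mono (cube_subset_closedBall hℓ.le (by nlinarith) hx)
      _ ≤ L * volume (closedBall x (S * ℓ)) := hball ⟨by positivity, hsmall⟩
      _ = L * ENNReal.ofReal (S ^ n) * ω * ENNReal.ofReal ℓ ^ n := by
          rw [Measure.addHaar_closedBall' volume x (by positivity), finrank_euclideanSpace_fin,
            mul_pow, ENNReal.ofReal_mul (by positivity), ENNReal.ofReal_pow hℓ.le]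
          ring
      _ ≤ _ := mul_le_mul_left le_self_add _
  · have hεℓ : ε / S ≤ ℓ := by rw [div_le_iff₀ hS]; linarith
    calc ρ (cube a ℓ) ≤ ρ Set.univ := measure_mono (Set.subset_univ _)
      _ = ρ Set.univ / ENNReal.ofReal (ε / S) ^ n * ENNReal.ofReal (ε / S) ^ n :=
          (ENNReal.div_mul_cancel hεS (by finiteness)).symm
      _ ≤ _ :=
          mul_le_mul' le_add_self (pow_le_pow_left₀ zero_le (ENNReal.ofReal_le_ofReal hεℓ) n)

end Differentiation

section Luxemburg

variable {n : ℕ}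

abbrev luxNorm (p : Euc n → ℝ) (h : Euc n → ℝ≥0∞) : ℝ≥0∞ :=
  luxNormE (fun x => ENNReal.ofReal (p x)) h

variable {p : Euc n → ℝ}

lemma modularE_ofReal (hp : ∀ x, 0 ≤ p x) (h : Euc n → ℝ≥0∞) :
    modularE (fun x => ENNReal.ofReal (p x)) h = ∫⁻ x, h x ^ p x := by
  simp [modularE, ENNReal.toReal_ofReal (hp _)]

lemma luxNorm_le (hp : ∀ x, 0 ≤ p x) {h : Euc n → ℝ≥0∞} {l : ℝ≥0∞} (hl : l ≠ 0)
    (hm : ∫⁻ x, (h x / l) ^ p x ≤ 1) : luxNorm p h ≤ l :=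
  sInf_le ⟨hl, (modularE_ofReal hp _).trans_le hm⟩

lemma le_luxNorm (hp : ∀ x, 0 ≤ p x) {h : Euc n → ℝ≥0∞} {c : ℝ≥0∞}
    (hc : ∀ l ≠ 0, ∫⁻ x, (h x / l) ^ p x ≤ 1 → c ≤ l) : c ≤ luxNorm p h :=
  le_sInf fun l hl => hc l hl.1 ((modularE_ofReal hp _).symm.trans_le hl.2)

lemma luxNorm_mono (hp : ∀ x, 0 ≤ p x) {h₁ h₂ : Euc n → ℝ≥0∞} (hle : h₁ ≤ h₂) :
    luxNorm p h₁ ≤ luxNorm p h₂ :=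
  le_luxNorm hp fun _ hl hm => luxNorm_le hp hl <| (lintegral_mono fun x =>
    ENNReal.rpow_le_rpow (ENNReal.div_le_div_right (hle x) _) (hp x)).trans hm

lemma lintegral_indicator_div_rpow (hp : ∀ x, 0 < p x) {Q : Set (Euc n)} (hQ : MeasurableSet Q)
    (h : Euc n → ℝ≥0∞) (l : ℝ≥0∞) :
    ∫⁻ x, (Q.indicator h x / l) ^ p x = ∫⁻ x in Q, (h x / l) ^ p x := by
  rw [← lintegral_indicator hQ]
  congr 1 with x
  by_cases hx : x ∈ Q
  · simp [hx]
  · simp [hx, ENNReal.zero_rpow_of_pos (hp x)]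

lemma lintegral_rpow_ne_top_of_luxNorm_ne_top (hp : ∀ x, 0 ≤ p x) {pp : ℝ} (hpp : ∀ x, p x ≤ pp)
    {h : Euc n → ℝ≥0∞} (hh : luxNorm p h ≠ ∞) : ∫⁻ x, h x ^ p x ≠ ∞ := by
  obtain ⟨l, ⟨hl0, hl⟩, hltop⟩ : ∃ l ∈ {l : ℝ≥0∞ | l ≠ 0 ∧
      modularE (fun x => ENNReal.ofReal (p x)) (fun x => h x / l) ≤ 1}, l ≠ ∞ := by
    by_contra! hc
    exact hh (sInf_eq_top.mpr hc)
  rw [modularE_ofReal hp] at hl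
  have hpt : ∀ x, h x ^ p x ≤ max l 1 ^ pp * (h x / l) ^ p x := fun x => calc
    h x ^ p x = l ^ p x * (h x / l) ^ p x := by
      rw [← ENNReal.mul_rpow_of_nonneg _ _ (hp x), ENNReal.mul_div_cancel hl0 hltop]
    _ ≤ max l 1 ^ pp * (h x / l) ^ p x := by
      gcongr
      calc l ^ p x ≤ max l 1 ^ p x := ENNReal.rpow_le_rpow (le_max_left _ _) (hp x)
        _ ≤ max l 1 ^ pp := ENNReal.rpow_le_rpow_of_exponent_le (le_max_right _ _) (hpp x)
  refine ne_top_of_le_ne_top ?_ ((lintegral_mono hpt).trans_eq (lintegral_const_mul' _ _ ?_))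
  · exact ENNReal.mul_ne_top (by finiteness) (ne_top_of_le_ne_top ENNReal.one_ne_top hl)
  · finiteness

lemma min_one_volume_rpow_le_luxNorm_indicator_one (hp : ∀ x, 0 < p x) {Q : Set (Euc n)}
    (hQ : MeasurableSet Q) {t : ℝ} (ht : 0 < t) (htp : ∀ y ∈ Q, t ≤ p y) :
    min 1 (volume Q ^ t⁻¹) ≤ luxNorm p (Q.indicator fun _ => 1) := by
  refine le_luxNorm (fun x => (hp x).le) fun l hl0 hl => ?_
  rcases le_or_gt 1 l with hl1 | hl1
  · exact min_le_of_left_le hl1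
  refine min_le_of_right_le ?_
  rw [lintegral_indicator_div_rpow hp hQ] at hl
  have hV : volume Q ≤ l ^ t := calc
    volume Q = l ^ t * ∫⁻ _ in Q, l⁻¹ ^ t := by
      rw [setLIntegral_const, ← mul_assoc, ← ENNReal.mul_rpow_of_nonneg _ _ ht.le,
        ENNReal.mul_inv_cancel hl0 hl1.ne_top, ENNReal.one_rpow, one_mul]
    _ ≤ l ^ t * ∫⁻ y in Q, (1 / l) ^ p y := by
      refine mul_le_mul_right (setLIntegral_mono' hQ fun y hy => ?_) _
      rw [one_div]
      exact ENNReal.rpow_le_rpow_of_exponent_le (ENNReal.one_le_inv.mpr hl1.le) (htp y hy)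
    _ ≤ l ^ t := by simpa using mul_le_mul_right hl (l ^ t)
  calc volume Q ^ t⁻¹ ≤ (l ^ t) ^ t⁻¹ := ENNReal.rpow_le_rpow hV (inv_nonneg.mpr ht.le)
    _ = l := ENNReal.rpow_rpow_inv ht.ne' l

lemma volume_rpow_inv_le_mul_luxNorm_indicator_one (hp : ∀ x, 0 < p x) {Q : Set (Euc n)}
    (hQ : MeasurableSet Q) {s δ : ℝ} (hs : 1 ≤ s) (hδ0 : 0 ≤ δ) (hδ : δ ≤ 1 / 2)
    (hpQ : ∀ y ∈ Q, |p y - s| ≤ δ) (hV : volume Q ≤ 1) {K : ℝ≥0∞} (hK : volume Q ^ (-δ) ≤ K) :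
    volume Q ^ s⁻¹ ≤ K ^ 2 * luxNorm p (Q.indicator fun _ => 1) := by
  set V := volume Q
  have hK1 : 1 ≤ K := calc
    1 = V ^ (0 : ℝ) := ENNReal.rpow_zero.symm
    _ ≤ V ^ (-δ) := ENNReal.rpow_le_rpow_of_exponent_ge hV (by linarith)
    _ ≤ K := hK
  have hnorm := min_one_volume_rpow_le_luxNorm_indicator_one hp hQ (t := s - δ) (by linarith)
    fun y hy => by linarith [(abs_le.mp (hpQ y hy)).1]
  refine le_trans ?_ (mul_le_mul_right hnorm _)
  rw [mul_min, mul_one]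
  refine le_min ((ENNReal.rpow_le_one hV (by positivity)).trans (one_le_pow₀ hK1)) ?_
  rcases eq_or_ne V 0 with hV0 | hV0
  · simp [hV0, ENNReal.zero_rpow_of_pos (by positivity : 0 < s⁻¹)]
  have hexp : (s - δ)⁻¹ ≤ s⁻¹ + 2 * δ := by
    have hs' : s⁻¹ * s = 1 := inv_mul_cancel₀ (by positivity)
    have hs1 : s⁻¹ ≤ 1 := inv_le_one_of_one_le₀ hs
    rw [inv_le_iff_one_le_mul₀ (by linarith)]
    nlinarith [mul_le_mul_of_nonneg_right hs1 hδ0, mul_nonneg hδ0 (by linarith : 0 ≤ s - δ - 1 / 2)]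
  calc V ^ s⁻¹ = (V ^ (-δ)) ^ 2 * V ^ (s⁻¹ + 2 * δ) := by
        rw [← ENNReal.rpow_natCast, ← ENNReal.rpow_mul,
          ← ENNReal.rpow_add _ _ hV0 (ne_top_of_le_ne_top ENNReal.one_ne_top hV)]
        ring_nf
    _ ≤ K ^ 2 * V ^ (s - δ)⁻¹ :=
        mul_le_mul' (by gcongr) (ENNReal.rpow_le_rpow_of_exponent_ge hV hexp)

lemma luxNorm_indicator_le_mul_volume_rpow_inv (hp : ∀ x, 0 < p x) {Q : Set (Euc n)}
    (hQ : MeasurableSet Q) {s δ : ℝ} (hs : 1 ≤ s) (hδ0 : 0 ≤ δ) (hδ : δ ≤ 1 / 2)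
    (hpQ : ∀ y ∈ Q, |p y - s| ≤ δ) (hV0 : volume Q ≠ 0) (hV : volume Q ≤ 1) {K : ℝ≥0∞}
    (hK : volume Q ^ (-δ) ≤ K) {A : ℝ≥0∞} (hA : 1 ≤ A) (hAtop : A ≠ ∞)
    {h : Euc n → ℝ≥0∞} (hhQ : ∫⁻ y in Q, h y ^ p y ≤ A * volume Q) :
    luxNorm p (Q.indicator h) ≤ (K * A) ^ 2 * volume Q ^ s⁻¹ := by
  set V := volume Q
  have hVtop : V ≠ ∞ := ne_top_of_le_ne_top ENNReal.one_ne_top hV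
  have hKV : 1 ≤ K * V ^ δ := calc
    1 = V ^ (-δ) * V ^ δ := by
      rw [← ENNReal.rpow_add _ _ hV0 hVtop, neg_add_cancel, ENNReal.rpow_zero]
    _ ≤ K * V ^ δ := mul_le_mul_left hK _
  have hKA : 1 ≤ K * A := calc
    1 ≤ K * V ^ δ := hKV
    _ ≤ K * A := mul_le_mul_right ((ENNReal.rpow_le_one hV hδ0).trans hA) K
  have hKA_sq : ((K * A) ^ 2) ^ (2⁻¹ : ℝ) = K * A := by
    rw [← ENNReal.rpow_natCast, ← ENNReal.rpow_mul]
    norm_num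
  have hpow : ∀ y ∈ Q, A * V ≤ ((K * A) ^ 2 * V ^ s⁻¹) ^ p y := by
    intro y hy
    obtain ⟨hlo, hhi⟩ := abs_le.mp (hpQ y hy)
    have hexp : s⁻¹ * p y ≤ 1 + δ := by
      rw [inv_mul_le_iff₀ (by linarith)]
      nlinarith
    calc A * V ≤ A * V * (K * V ^ δ) := le_mul_of_one_le_right' hKV
      _ = ((K * A) ^ 2) ^ (2⁻¹ : ℝ) * V ^ (1 + δ) := by
          rw [hKA_sq, ENNReal.rpow_add _ _ hV0 hVtop, ENNReal.rpow_one]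
          ring
      _ ≤ ((K * A) ^ 2) ^ p y * (V ^ s⁻¹) ^ p y := by
          rw [← ENNReal.rpow_mul]
          exact mul_le_mul' (ENNReal.rpow_le_rpow_of_exponent_le (one_le_pow₀ hKA) (by linarith))
            (ENNReal.rpow_le_rpow_of_exponent_ge hV hexp)
      _ = ((K * A) ^ 2 * V ^ s⁻¹) ^ p y := (ENNReal.mul_rpow_of_nonneg _ _ (hp y).le).symm
  have hAV0 : A * V ≠ 0 := mul_ne_zero (one_pos.trans_le hA).ne' hV0
  refine luxNorm_le (fun x => (hp x).le) ?_ ?_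
  · exact mul_ne_zero (pow_ne_zero 2 (one_pos.trans_le hKA).ne')
      (ENNReal.rpow_pos (pos_iff_ne_zero.mpr hV0) hVtop).ne'
  rw [lintegral_indicator_div_rpow hp hQ]
  calc ∫⁻ y in Q, (h y / ((K * A) ^ 2 * V ^ s⁻¹)) ^ p y ≤ ∫⁻ y in Q, h y ^ p y * (A * V)⁻¹ :=
        setLIntegral_mono' hQ fun y hy => by
          rw [ENNReal.div_rpow_of_nonneg _ _ (hp y).le, div_eq_mul_inv]
          exact mul_le_mul_right (ENNReal.inv_le_inv.mpr (hpow y hy)) _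
    _ = (∫⁻ y in Q, h y ^ p y) * (A * V)⁻¹ :=
        lintegral_mul_const' _ _ (ENNReal.inv_ne_top.mpr hAV0)
    _ ≤ A * V * (A * V)⁻¹ := mul_le_mul_left hhQ _
    _ = 1 := ENNReal.mul_inv_cancel hAV0 (ENNReal.mul_ne_top hAtop hVtop)

lemma luxNorm_indicator_le_mul_luxNorm_indicator_one (hp : ∀ x, 0 < p x) {Q : Set (Euc n)}
    (hQ : MeasurableSet Q) {s δ : ℝ} (hs : 1 ≤ s) (hδ0 : 0 ≤ δ) (hδ : δ ≤ 1 / 2)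
    (hpQ : ∀ y ∈ Q, |p y - s| ≤ δ) (hV0 : volume Q ≠ 0) (hV : volume Q ≤ 1) {K : ℝ≥0∞}
    (hK : volume Q ^ (-δ) ≤ K) {A : ℝ≥0∞} (hA : 1 ≤ A) (hAtop : A ≠ ∞)
    {h : Euc n → ℝ≥0∞} (hhQ : ∫⁻ y in Q, h y ^ p y ≤ A * volume Q) :
    luxNorm p (Q.indicator h) ≤ (K * A) ^ 2 * K ^ 2 * luxNorm p (Q.indicator fun _ => 1) := by
  rw [mul_assoc]
  exact (luxNorm_indicator_le_mul_volume_rpow_inv hp hQ hs hδ0 hδ hpQ hV0 hV hK hA hAtop hhQ).trans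
    (mul_le_mul_right (volume_rpow_inv_le_mul_luxNorm_indicator_one hp hQ hs hδ0 hδ hpQ hV hK) _)

lemma luxNorm_indicator_le_div_min_mul (hp : ∀ x, 1 ≤ p x) {Q : Set (Euc n)}
    (hQ : MeasurableSet Q) {v : ℝ≥0∞} (hv : v ≠ 0) (hvQ : v ≤ volume Q) (h : Euc n → ℝ≥0∞) :
    luxNorm p (Q.indicator h) ≤ luxNorm p h / min 1 v * luxNorm p (Q.indicator fun _ => 1) := by
  have hp0 : ∀ x, 0 < p x := fun x => one_pos.trans_le (hp x)
  have hmQ : min 1 v ≤ luxNorm p (Q.indicator fun _ => 1) := by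
    have := min_one_volume_rpow_le_luxNorm_indicator_one hp0 hQ one_pos fun y _ => hp y
    rw [inv_one, ENNReal.rpow_one] at this
    exact (min_le_min_left 1 hvQ).trans this
  calc luxNorm p (Q.indicator h) ≤ luxNorm p h :=
        luxNorm_mono (fun x => (hp0 x).le) (Set.indicator_le_self Q h)
    _ = luxNorm p h / min 1 v * min 1 v := (ENNReal.div_mul_cancel (by simp [hv])
          (ne_top_of_le_ne_top ENNReal.one_ne_top (min_le_left _ _))).symm
    _ ≤ _ := mul_le_mul_right hmQ _

end Luxemburg

lemma MnormAvg_le {n : ℕ} {p f : Euc n → ℝ≥0∞} {x : Euc n} {B : ℝ≥0∞}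
    (h : ∀ (a : Euc n) (ℓ : ℝ), 0 < ℓ → x ∈ cube a ℓ →
      luxNormE p ((cube a ℓ).indicator f) ≤ B * luxNormE p ((cube a ℓ).indicator fun _ => 1)) :
    MnormAvg p f x ≤ B :=
  iSup₂_le fun a ℓ => iSup₂_le fun hℓ hx => ENNReal.div_le_of_le_mul (h a ℓ hℓ hx)

theorem stmt15_general {n : ℕ} (p : Euc n → ℝ) (C0 pp : ℝ)
    (hp1 : ∀ x, 1 ≤ p x) (hpp : ∀ x, p x ≤ pp)
    (h0 : LocLH p C0)
    (f : Euc n → ℝ)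
    (hfL : luxNormE (fun x => ENNReal.ofReal (p x)) (fun x => ENNReal.ofReal |f x|) ≠ ∞) :
    ∀ᵐ x : Euc n,
      MnormAvg (fun x => ENNReal.ofReal (p x)) (fun y => ENNReal.ofReal |f y|) x < ∞ := by
  set F : Euc n → ℝ≥0∞ := fun y => ENNReal.ofReal |f y|
  have hp : ∀ x, 0 < p x := fun x => one_pos.trans_le (hp1 x)
  have := isFiniteMeasure_withDensity
    (lintegral_rpow_ne_top_of_luxNorm_ne_top (fun x => (hp x).le) hpp hfL)
  obtain ⟨ℓ0, hℓ0, hℓ01, K, hK, hosc⟩ := h0.exists_volume_cube_rpow_neg_le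
  have hv : ENNReal.ofReal ℓ0 ^ n ≠ 0 := pow_ne_zero _ (ENNReal.ofReal_pos.mpr hℓ0).ne'
  filter_upwards [ae_exists_measure_cube_le (volume.withDensity fun y => F y ^ p y)]
    with x ⟨A, hA, hρ⟩
  refine (MnormAvg_le fun a ℓ hℓ hx => ?_).trans_lt (b :=
    (K * (A + 1)) ^ 2 * K ^ 2 + luxNorm p F / min 1 (ENNReal.ofReal ℓ0 ^ n)) ?_
  · rcases le_or_gt ℓ ℓ0 with hsmall | hlarge
    · obtain ⟨δ, hδ0, hδ, hpQ, hKQ⟩ := hosc a ℓ hℓ hsmall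
      have hV0 : volume (cube a ℓ) ≠ 0 := by
        rw [volume_cube]; exact pow_ne_zero _ (ENNReal.ofReal_pos.mpr hℓ).ne'
      have hV1 : volume (cube a ℓ) ≤ 1 := by
        rw [volume_cube]; exact pow_le_one₀ zero_le (ENNReal.ofReal_le_one.mpr (by linarith))
      have hFQ : ∫⁻ y in cube a ℓ, F y ^ p y ≤ (A + 1) * volume (cube a ℓ) :=
        (withDensity_apply _ (measurableSet_cube a ℓ)).symm.trans_le
          ((hρ a ℓ hℓ hx).trans (mul_le_mul_left le_self_add _))
      exact (luxNorm_indicator_le_mul_luxNorm_indicator_one hp (measurableSet_cube a ℓ) (hp1 x)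
        hδ0 hδ (fun y hy => hpQ y hy x hx) hV0 hV1 hKQ le_add_self (by finiteness) hFQ).trans
        (mul_le_mul_left le_self_add _)
    · have hvQ : ENNReal.ofReal ℓ0 ^ n ≤ volume (cube a ℓ) := by
        rw [volume_cube]; exact pow_le_pow_left₀ zero_le (ENNReal.ofReal_le_ofReal hlarge.le) n
      exact (luxNorm_indicator_le_div_min_mul hp1 (measurableSet_cube a ℓ) hv hvQ F).trans
        (mul_le_mul_left le_add_self _)
  · exact ENNReal.add_lt_top.mpr ⟨by finiteness, ENNReal.div_lt_top hfL (by simp [hv])⟩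

/-- Let `p(·) ∈ P(ℝⁿ) ∩ LH(ℝⁿ)` with `p_+ < ∞`. If
`f ∈ L^{p(·)}(ℝⁿ)`, then `M_{p(·)} f(x) < ∞` for almost every `x ∈ ℝⁿ`. -/
theorem stmt15 {n : ℕ} (p : Euc n → ℝ) (C0 Ci pinf pp : ℝ)
    (hp1 : ∀ x, 1 ≤ p x) (hpp : ∀ x, p x ≤ pp) (hpm : Measurable p)
    (h0 : LocLH p C0) (hi : InfLH p Ci pinf)
    (f : Euc n → ℝ) (hf : Measurable f)
    (hfL : luxNormE (fun x => ENNReal.ofReal (p x)) (fun x => ENNReal.ofReal |f x|) ≠ ∞) :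
    ∀ᵐ x : Euc n,
      MnormAvg (fun x => ENNReal.ofReal (p x)) (fun y => ENNReal.ofReal |f y|) x < ∞ :=
  stmt15_general p C0 pp hp1 hpp h0 f hfL
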